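/- arXiv:1902.10317 — 4 statements merged into one kernel-verified Lean document; each statement's English description precedes it below -/
import Mathlib

section
/- Let G₁, G₂ : X → R^n be measurable maps on a measurable space X with probability measure μ₀, and let y ∈ R^n, γ > 0. Suppose there are constants M and ε ≥ 0 such that sup_{x ∈ X} max(‖G₁(x)‖, ‖G₂(x)‖) ≤ M and sup_{x ∈ X} ‖G₁(x) − G₂(x)‖ ≤ ε. Then the likelihoods L_i(x) = exp(−‖y − G_i(x)‖²/(2γ²)) satisfy sup_{x∈X} |L₁(x) − L₂(x)| ≤ (1/(2γ²))·(2‖y‖ + 2M)·ε. -/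
open MeasureTheory

lemma exp_neg_diff_le (a b : ℝ) (ha : 0 ≤ a) (hb : 0 ≤ b) :
    |Real.exp (-a) - Real.exp (-b)| ≤ |a - b| := by
  wlog h : b ≤ a generalizing a b
  · rw [abs_sub_comm, abs_sub_comm a b]
    exact this b a hb ha (le_of_not_ge h)
  have h1 : Real.exp (-a) ≤ Real.exp (-b) := Real.exp_le_exp.2 (by linarith)
  rw [abs_of_nonpos (by linarith), abs_of_nonneg (by linarith)]
  have h2 : Real.exp (-a) = Real.exp (-b) * Real.exp (b - a) := by
    rw [← Real.exp_add]; ring_nf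
  have h3 : 1 - (a - b) ≤ Real.exp (b - a) := by
    have := Real.add_one_le_exp (b - a); linarith
  have h4 : Real.exp (-b) ≤ 1 := Real.exp_le_one_iff.2 (by linarith)
  nlinarith [Real.exp_pos (-b)]

/-- If `G₁, G₂ : X → ℝⁿ` are measurable, uniformly bounded by `M`, and uniformly
`ε`-close, then the Gaussian likelihoods `Lᵢ(x) = exp(−‖y − Gᵢ(x)‖²/(2γ²))` satisfy
`sup_x |L₁(x) − L₂(x)| ≤ (1/(2γ²))·(2‖y‖ + 2M)·ε`. -/
theorem stmt7 {X : Type*} [MeasurableSpace X] (μ₀ : Measure X)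
    [IsProbabilityMeasure μ₀] {n : ℕ}
    (G₁ G₂ : X → EuclideanSpace ℝ (Fin n))
    (hG₁ : Measurable G₁) (hG₂ : Measurable G₂)
    (y : EuclideanSpace ℝ (Fin n)) (γ M ε : ℝ) (hγ : 0 < γ) (hε : 0 ≤ ε)
    (hM : ∀ x, max ‖G₁ x‖ ‖G₂ x‖ ≤ M)
    (hdiff : ∀ x, ‖G₁ x - G₂ x‖ ≤ ε) :
    ∀ x, |Real.exp (-‖y - G₁ x‖ ^ 2 / (2 * γ ^ 2)) -
            Real.exp (-‖y - G₂ x‖ ^ 2 / (2 * γ ^ 2))| ≤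
          (1 / (2 * γ ^ 2)) * (2 * ‖y‖ + 2 * M) * ε := by
  intro x
  set c : ℝ := 2 * γ ^ 2 with hc
  have hcpos : 0 < c := by positivity
  set a : ℝ := ‖y - G₁ x‖ with ha
  set b : ℝ := ‖y - G₂ x‖ with hb
  have ha0 : 0 ≤ a := norm_nonneg _
  have hb0 : 0 ≤ b := norm_nonneg _
  have key : |Real.exp (-a ^ 2 / c) - Real.exp (-b ^ 2 / c)| ≤
      |a ^ 2 / c - b ^ 2 / c| := by
    have := exp_neg_diff_le (a ^ 2 / c) (b ^ 2 / c) (by positivity) (by positivity)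
    simpa [neg_div] using this
  refine key.trans ?_
  have habs : |a - b| ≤ ε := by
    have h1 : |a - b| ≤ ‖(y - G₁ x) - (y - G₂ x)‖ := abs_norm_sub_norm_le _ _
    have h2 : (y - G₁ x) - (y - G₂ x) = G₂ x - G₁ x := by abel
    rw [h2, norm_sub_rev] at h1
    exact h1.trans (hdiff x)
  have hM1 : a ≤ ‖y‖ + M := by
    have := (le_max_left ‖G₁ x‖ ‖G₂ x‖).trans (hM x)
    calc a ≤ ‖y‖ + ‖G₁ x‖ := norm_sub_le _ _
    _ ≤ ‖y‖ + M := by linarith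
  have hM2 : b ≤ ‖y‖ + M := by
    have := (le_max_right ‖G₁ x‖ ‖G₂ x‖).trans (hM x)
    calc b ≤ ‖y‖ + ‖G₂ x‖ := norm_sub_le _ _
    _ ≤ ‖y‖ + M := by linarith
  have hfac : |a ^ 2 / c - b ^ 2 / c| = |a - b| * (a + b) / c := by
    rw [div_sub_div_same, abs_div, abs_of_pos hcpos]
    congr 1
    have : a ^ 2 - b ^ 2 = (a - b) * (a + b) := by ring
    rw [this, abs_mul, abs_of_nonneg (by positivity : (0:ℝ) ≤ a + b)]
  rw [hfac, div_le_iff₀ hcpos]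
  have h3 : |a - b| * (a + b) ≤ ε * (2 * ‖y‖ + 2 * M) := by
    apply mul_le_mul habs (by linarith) (by positivity) hε
  calc |a - b| * (a + b) ≤ ε * (2 * ‖y‖ + 2 * M) := h3
  _ = 1 / c * (2 * ‖y‖ + 2 * M) * ε * c := by field_simp
end

section
/- In the setting of the previous statement, the normalization constants Z_i = ∫_X exp(−‖y − G_i(x)‖²/(2γ²)) dμ₀(x) satisfy |Z₁ − Z₂| ≤ (1/(2γ²))·(2‖y‖ + 2M)·ε. Moreover each Z_i is bounded below by exp(−(‖y‖+M)²/(2γ²)) > 0. -/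
open MeasureTheory

lemma exp_lip_nonpos {s t : ℝ} (hs : s ≤ 0) (ht : t ≤ 0) :
    |Real.exp s - Real.exp t| ≤ |s - t| := by
  wlog h : t ≤ s generalizing s t
  · rw [abs_sub_comm, abs_sub_comm s t]; exact this ht hs (le_of_not_ge h)
  rw [abs_of_nonneg (sub_nonneg.2 (Real.exp_le_exp.2 h)), abs_of_nonneg (sub_nonneg.2 h)]
  have h1 : Real.exp s * Real.exp (t - s) = Real.exp t := by
    rw [← Real.exp_add]; ring_nf
  have h2 := Real.add_one_le_exp (t - s)
  have h3 := Real.exp_pos s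
  have h4 : Real.exp s ≤ 1 := Real.exp_le_one_iff.2 hs
  nlinarith

lemma integrable_aux {X : Type*} [MeasurableSpace X] (μ₀ : Measure X)
    [IsProbabilityMeasure μ₀] {n : ℕ} (G : X → EuclideanSpace ℝ (Fin n))
    (hG : Measurable G) (y : EuclideanSpace ℝ (Fin n)) (γ : ℝ) :
    Integrable (fun x => Real.exp (-‖y - G x‖ ^ 2 / (2 * γ ^ 2))) μ₀ := by
  have hm : Measurable fun x => Real.exp (-‖y - G x‖ ^ 2 / (2 * γ ^ 2)) :=
    (Real.measurable_exp.comp (((measurable_const.sub hG).norm.pow measurable_const).neg.div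
      measurable_const))
  refine (integrable_const (1 : ℝ)).mono' hm.aestronglyMeasurable ?_
  filter_upwards with x
  rw [Real.norm_eq_abs, abs_of_pos (Real.exp_pos _)]
  exact Real.exp_le_one_iff.2 (div_nonpos_of_nonpos_of_nonneg
    (neg_nonpos.2 (sq_nonneg _)) (by positivity))

/-- Under the assumptions of the previous statement, the normalization constants
`Zᵢ = ∫ exp(−‖y − Gᵢ(x)‖²/(2γ²)) dμ₀` satisfy
`|Z₁ − Z₂| ≤ (1/(2γ²))·(2‖y‖ + 2M)·ε`, and each `Zᵢ` is bounded below by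
`exp(−(‖y‖+M)²/(2γ²)) > 0`. -/
theorem stmt8 {X : Type*} [MeasurableSpace X] (μ₀ : Measure X)
    [IsProbabilityMeasure μ₀] {n : ℕ}
    (G₁ G₂ : X → EuclideanSpace ℝ (Fin n))
    (hG₁ : Measurable G₁) (hG₂ : Measurable G₂)
    (y : EuclideanSpace ℝ (Fin n)) (γ M ε : ℝ) (hγ : 0 < γ) (hε : 0 ≤ ε)
    (hM : ∀ x, max ‖G₁ x‖ ‖G₂ x‖ ≤ M)
    (hdiff : ∀ x, ‖G₁ x - G₂ x‖ ≤ ε) :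
    |(∫ x, Real.exp (-‖y - G₁ x‖ ^ 2 / (2 * γ ^ 2)) ∂μ₀) -
       ∫ x, Real.exp (-‖y - G₂ x‖ ^ 2 / (2 * γ ^ 2)) ∂μ₀| ≤
      (1 / (2 * γ ^ 2)) * (2 * ‖y‖ + 2 * M) * ε ∧
    Real.exp (-(‖y‖ + M) ^ 2 / (2 * γ ^ 2)) ≤
      ∫ x, Real.exp (-‖y - G₁ x‖ ^ 2 / (2 * γ ^ 2)) ∂μ₀ ∧
    Real.exp (-(‖y‖ + M) ^ 2 / (2 * γ ^ 2)) ≤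
      ∫ x, Real.exp (-‖y - G₂ x‖ ^ 2 / (2 * γ ^ 2)) ∂μ₀ ∧
    0 < Real.exp (-(‖y‖ + M) ^ 2 / (2 * γ ^ 2)) := by
  have hc : (0:ℝ) < 2 * γ ^ 2 := by positivity
  have hi₁ := integrable_aux μ₀ G₁ hG₁ y γ
  have hi₂ := integrable_aux μ₀ G₂ hG₂ y γ
  have hM₁ : ∀ x, ‖G₁ x‖ ≤ M := fun x => le_trans (le_max_left _ _) (hM x)
  have hM₂ : ∀ x, ‖G₂ x‖ ≤ M := fun x => le_trans (le_max_right _ _) (hM x)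
  -- pointwise difference bound
  have hpt : ∀ x, |Real.exp (-‖y - G₁ x‖ ^ 2 / (2 * γ ^ 2)) -
      Real.exp (-‖y - G₂ x‖ ^ 2 / (2 * γ ^ 2))| ≤
      (1 / (2 * γ ^ 2)) * (2 * ‖y‖ + 2 * M) * ε := by
    intro x
    set a := ‖y - G₁ x‖ with ha
    set b := ‖y - G₂ x‖ with hb
    have ha0 : 0 ≤ a := norm_nonneg _
    have hb0 : 0 ≤ b := norm_nonneg _
    have haM : a ≤ ‖y‖ + M := le_trans (norm_sub_le _ _) (by linarith [hM₁ x])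
    have hbM : b ≤ ‖y‖ + M := le_trans (norm_sub_le _ _) (by linarith [hM₂ x])
    have hab : |a - b| ≤ ε := by
      refine le_trans (abs_norm_sub_norm_le _ _) ?_
      have : (y - G₁ x) - (y - G₂ x) = G₂ x - G₁ x := by abel
      rw [this, norm_sub_rev]
      exact hdiff x
    calc |Real.exp (-a ^ 2 / (2 * γ ^ 2)) - Real.exp (-b ^ 2 / (2 * γ ^ 2))|
        ≤ |(-a ^ 2 / (2 * γ ^ 2)) - (-b ^ 2 / (2 * γ ^ 2))| :=
          exp_lip_nonpos (div_nonpos_of_nonpos_of_nonneg (neg_nonpos.2 (sq_nonneg _)) hc.le)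
            (div_nonpos_of_nonpos_of_nonneg (neg_nonpos.2 (sq_nonneg _)) hc.le)
      _ = (1 / (2 * γ ^ 2)) * |a ^ 2 - b ^ 2| := by
          rw [div_sub_div_same, abs_div, abs_of_pos hc]
          rw [show -a ^ 2 - -b ^ 2 = -(a ^ 2 - b ^ 2) by ring, abs_neg]
          ring
      _ = (1 / (2 * γ ^ 2)) * (|a + b| * |a - b|) := by
          rw [← abs_mul]; ring_nf
      _ ≤ (1 / (2 * γ ^ 2)) * ((2 * ‖y‖ + 2 * M) * ε) := by
          apply mul_le_mul_of_nonneg_left _ (by positivity)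
          have hsum : |a + b| ≤ 2 * ‖y‖ + 2 * M := by
            rw [abs_of_nonneg (by linarith)]; linarith
          exact mul_le_mul hsum hab (abs_nonneg _) (by linarith)
      _ = (1 / (2 * γ ^ 2)) * (2 * ‖y‖ + 2 * M) * ε := by ring
  -- lower bounds
  have hlow : ∀ (G : X → EuclideanSpace ℝ (Fin n)), (∀ x, ‖G x‖ ≤ M) →
      Integrable (fun x => Real.exp (-‖y - G x‖ ^ 2 / (2 * γ ^ 2))) μ₀ →
      Real.exp (-(‖y‖ + M) ^ 2 / (2 * γ ^ 2)) ≤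
        ∫ x, Real.exp (-‖y - G x‖ ^ 2 / (2 * γ ^ 2)) ∂μ₀ := by
    intro G hMb hint
    have hptle : ∀ x, Real.exp (-(‖y‖ + M) ^ 2 / (2 * γ ^ 2)) ≤
        Real.exp (-‖y - G x‖ ^ 2 / (2 * γ ^ 2)) := by
      intro x
      apply Real.exp_le_exp.2
      apply (div_le_div_iff_of_pos_right hc).2
      have hb : ‖y - G x‖ ≤ ‖y‖ + M := le_trans (norm_sub_le _ _) (by linarith [hMb x])
      have hb0 : (0:ℝ) ≤ ‖y - G x‖ := norm_nonneg _
      nlinarith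
    calc Real.exp (-(‖y‖ + M) ^ 2 / (2 * γ ^ 2))
        = ∫ _, Real.exp (-(‖y‖ + M) ^ 2 / (2 * γ ^ 2)) ∂μ₀ := by
          simp
      _ ≤ ∫ x, Real.exp (-‖y - G x‖ ^ 2 / (2 * γ ^ 2)) ∂μ₀ :=
          integral_mono (integrable_const _) hint hptle
  refine ⟨?_, hlow G₁ hM₁ hi₁, hlow G₂ hM₂ hi₂, Real.exp_pos _⟩
  rw [← integral_sub hi₁ hi₂]
  calc |∫ x, (Real.exp (-‖y - G₁ x‖ ^ 2 / (2 * γ ^ 2)) -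
          Real.exp (-‖y - G₂ x‖ ^ 2 / (2 * γ ^ 2))) ∂μ₀|
      ≤ ∫ x, |Real.exp (-‖y - G₁ x‖ ^ 2 / (2 * γ ^ 2)) -
          Real.exp (-‖y - G₂ x‖ ^ 2 / (2 * γ ^ 2))| ∂μ₀ := by
        simpa [Real.norm_eq_abs] using
          norm_integral_le_integral_norm (μ := μ₀) (f := fun x =>
            Real.exp (-‖y - G₁ x‖ ^ 2 / (2 * γ ^ 2)) -
            Real.exp (-‖y - G₂ x‖ ^ 2 / (2 * γ ^ 2)))
    _ ≤ ∫ _, (1 / (2 * γ ^ 2)) * (2 * ‖y‖ + 2 * M) * ε ∂μ₀ :=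
        integral_mono (hi₁.sub hi₂).abs (integrable_const _) hpt
    _ = (1 / (2 * γ ^ 2)) * (2 * ‖y‖ + 2 * M) * ε := by simp
end

section
/- Let X be a measurable space with probability measure μ₀, and let L₁, L₂ : X → (0, ∞) be measurable likelihoods with 0 < c ≤ L_i(x) ≤ C for all x ∈ X, and sup_x |L₁(x) − L₂(x)| ≤ δ. Define Z_i = ∫ L_i dμ₀ and the posterior measures μ_i(dx) = Z_i^{-1} L_i(x) μ₀(dx). Then the Kullback–Leibler divergence satisfies KL(μ₁, μ₂) ≤ sup_x |log(Z₂/Z₁) + log(L₁(x)/L₂(x))| ≤ (δ/c) + (δ/c), i.e. KL(μ₁, μ₂) ≤ 2δ/c. -/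
open MeasureTheory

lemma log_sub_le_aux {c u v : ℝ} (hc : 0 < c) (hu : c ≤ u) (hv : c ≤ v) :
    Real.log u - Real.log v ≤ |u - v| / c := by
  have hu0 : 0 < u := hc.trans_le hu
  have hv0 : 0 < v := hc.trans_le hv
  have h1 : Real.log u - Real.log v ≤ u / v - 1 := by
    rw [← Real.log_div hu0.ne' hv0.ne']
    exact Real.log_le_sub_one_of_pos (div_pos hu0 hv0)
  have h2 : u / v - 1 = (u - v) / v := by field_simp
  rcases le_or_gt (u - v) 0 with h | h
  · have : (u - v) / v ≤ 0 := div_nonpos_of_nonpos_of_nonneg h hv0.le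
    have h4 : (0:ℝ) ≤ |u - v| / c := div_nonneg (abs_nonneg _) hc.le
    linarith
  · have habs : |u - v| = u - v := abs_of_pos h
    have h3 : (u - v) / v ≤ (u - v) / c := by gcongr
    rw [habs]
    linarith
  
lemma log_div_abs_le {a b c : ℝ} (hc : 0 < c) (ha : c ≤ a) (hb : c ≤ b) :
    |Real.log (a / b)| ≤ |a - b| / c := by
  have ha0 : 0 < a := hc.trans_le ha
  have hb0 : 0 < b := hc.trans_le hb
  rw [Real.log_div ha0.ne' hb0.ne', abs_le]
  constructor
  · have := log_sub_le_aux hc hb ha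
    rw [abs_sub_comm] at this
    linarith
  · exact log_sub_le_aux hc ha hb

/-- For likelihoods `L₁, L₂` with `0 < c ≤ Lᵢ ≤ C` and `sup |L₁ − L₂| ≤ δ`, the
Kullback–Leibler divergence between the posteriors `μᵢ(dx) = Zᵢ⁻¹ Lᵢ(x) μ₀(dx)`
(written as an integral against `μ₀`) is bounded:
`KL(μ₁, μ₂) ≤ sup_x |log(Z₂/Z₁) + log(L₁(x)/L₂(x))| ≤ 2δ/c`. -/
theorem stmt9 {X : Type*} [MeasurableSpace X] (μ₀ : Measure X)
    [IsProbabilityMeasure μ₀] (L₁ L₂ : X → ℝ)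
    (hm₁ : Measurable L₁) (hm₂ : Measurable L₂)
    (c C δ : ℝ) (hc : 0 < c) (hδ0 : 0 ≤ δ)
    (hlb : ∀ x, c ≤ L₁ x ∧ c ≤ L₂ x)
    (hub : ∀ x, L₁ x ≤ C ∧ L₂ x ≤ C)
    (hδ : ∀ x, |L₁ x - L₂ x| ≤ δ) :
    (∀ x, |Real.log ((∫ z, L₂ z ∂μ₀) / ∫ z, L₁ z ∂μ₀) +
        Real.log (L₁ x / L₂ x)| ≤ 2 * δ / c) ∧
    (∫ x, ((∫ z, L₁ z ∂μ₀)⁻¹ * L₁ x) *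
        Real.log (((∫ z, L₂ z ∂μ₀) * L₁ x) / ((∫ z, L₁ z ∂μ₀) * L₂ x)) ∂μ₀) ≤
      2 * δ / c := by
  have hi₁ : Integrable L₁ μ₀ := by
    apply (integrable_const C).mono' hm₁.aestronglyMeasurable
    filter_upwards with x
    rw [Real.norm_eq_abs, abs_of_nonneg (hc.le.trans (hlb x).1)]
    exact (hub x).1
  have hi₂ : Integrable L₂ μ₀ := by
    apply (integrable_const C).mono' hm₂.aestronglyMeasurable
    filter_upwards with x
    rw [Real.norm_eq_abs, abs_of_nonneg (hc.le.trans (hlb x).2)]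
    exact (hub x).2
  set Z₁ := ∫ z, L₁ z ∂μ₀ with hZ₁def
  set Z₂ := ∫ z, L₂ z ∂μ₀ with hZ₂def
  have hZ₁ : c ≤ Z₁ := by
    have := integral_mono (integrable_const c) hi₁ (fun x => (hlb x).1)
    simpa using this
  have hZ₂ : c ≤ Z₂ := by
    have := integral_mono (integrable_const c) hi₂ (fun x => (hlb x).2)
    simpa using this
  have hZ₁0 : 0 < Z₁ := hc.trans_le hZ₁
  have hZ₂0 : 0 < Z₂ := hc.trans_le hZ₂
  have hZdiff : |Z₂ - Z₁| ≤ δ := by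
    have h1 : Z₂ - Z₁ = ∫ z, (L₂ z - L₁ z) ∂μ₀ := (integral_sub hi₂ hi₁).symm
    rw [h1]
    calc |∫ z, (L₂ z - L₁ z) ∂μ₀| ≤ ∫ z, |L₂ z - L₁ z| ∂μ₀ := by
          simpa [Real.norm_eq_abs] using
            norm_integral_le_integral_norm (μ := μ₀) (fun z => L₂ z - L₁ z)
      _ ≤ ∫ _z, δ ∂μ₀ := by
          apply integral_mono (hi₂.sub hi₁).abs (integrable_const δ)
          intro x
          simp only [Pi.sub_apply, abs_sub_comm]
          exact hδ x
      _ = δ := by simp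
  have hpart1 : ∀ x, |Real.log (Z₂ / Z₁) + Real.log (L₁ x / L₂ x)| ≤ 2 * δ / c := by
    intro x
    have h1 : |Real.log (Z₂ / Z₁)| ≤ δ / c := by
      calc |Real.log (Z₂ / Z₁)| ≤ |Z₂ - Z₁| / c := log_div_abs_le hc hZ₂ hZ₁
        _ ≤ δ / c := by gcongr
    have h2 : |Real.log (L₁ x / L₂ x)| ≤ δ / c := by
      calc |Real.log (L₁ x / L₂ x)| ≤ |L₁ x - L₂ x| / c :=
            log_div_abs_le hc (hlb x).1 (hlb x).2
        _ ≤ δ / c := by gcongr; exact hδ x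
    calc |Real.log (Z₂ / Z₁) + Real.log (L₁ x / L₂ x)|
        ≤ |Real.log (Z₂ / Z₁)| + |Real.log (L₁ x / L₂ x)| := abs_add_le _ _
      _ ≤ δ / c + δ / c := add_le_add h1 h2
      _ = 2 * δ / c := by ring
  refine ⟨hpart1, ?_⟩
  have hlog : ∀ x, Real.log (Z₂ * L₁ x / (Z₁ * L₂ x)) =
      Real.log (Z₂ / Z₁) + Real.log (L₁ x / L₂ x) := by
    intro x
    have h1 : 0 < L₁ x := hc.trans_le (hlb x).1
    have h2 : 0 < L₂ x := hc.trans_le (hlb x).2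
    rw [show Z₂ * L₁ x / (Z₁ * L₂ x) = (Z₂ / Z₁) * (L₁ x / L₂ x) by
      field_simp]
    exact Real.log_mul (div_pos hZ₂0 hZ₁0).ne' (div_pos h1 h2).ne'
  have hbound : ∀ x, Z₁⁻¹ * L₁ x * Real.log (Z₂ * L₁ x / (Z₁ * L₂ x)) ≤
      Z₁⁻¹ * L₁ x * (2 * δ / c) := by
    intro x
    apply mul_le_mul_of_nonneg_left _ (mul_nonneg (inv_nonneg.mpr hZ₁0.le) (hc.le.trans (hlb x).1))
    rw [hlog x]
    exact le_of_abs_le (hpart1 x)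
  have hmeas : Measurable fun x => Z₁⁻¹ * L₁ x * Real.log (Z₂ * L₁ x / (Z₁ * L₂ x)) := by
    apply Measurable.mul (measurable_const.mul hm₁)
    exact Real.measurable_log.comp ((measurable_const.mul hm₁).div (measurable_const.mul hm₂))
  have hiL : Integrable (fun x => Z₁⁻¹ * L₁ x * Real.log (Z₂ * L₁ x / (Z₁ * L₂ x))) μ₀ := by
    apply (integrable_const (Z₁⁻¹ * C * (2 * δ / c))).mono' hmeas.aestronglyMeasurable
    filter_upwards with x
    have h1 : 0 ≤ L₁ x := hc.le.trans (hlb x).1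
    rw [Real.norm_eq_abs, abs_mul]
    have habslog : |Real.log (Z₂ * L₁ x / (Z₁ * L₂ x))| ≤ 2 * δ / c := by
      rw [hlog x]; exact hpart1 x
    have habsmul : |Z₁⁻¹ * L₁ x| ≤ Z₁⁻¹ * C := by
      rw [abs_of_nonneg (mul_nonneg (inv_nonneg.mpr hZ₁0.le) h1)]
      exact mul_le_mul_of_nonneg_left (hub x).1 (inv_nonneg.mpr hZ₁0.le)
    have hC : 0 < C := hc.trans_le ((hlb x).1.trans (hub x).1)
    exact mul_le_mul habsmul habslog (abs_nonneg _)
      (mul_nonneg (inv_nonneg.mpr hZ₁0.le) hC.le)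
  calc (∫ x, Z₁⁻¹ * L₁ x * Real.log (Z₂ * L₁ x / (Z₁ * L₂ x)) ∂μ₀)
      ≤ ∫ x, Z₁⁻¹ * L₁ x * (2 * δ / c) ∂μ₀ := by
        apply integral_mono hiL _ hbound
        apply Integrable.mul_const
        exact hi₁.const_mul _
    _ = 2 * δ / c := by
        rw [show (fun x => Z₁⁻¹ * L₁ x * (2 * δ / c)) =
            fun x => (Z₁⁻¹ * (2 * δ / c)) * L₁ x from funext fun x => by ring]
        rw [integral_const_mul, ← hZ₁def]
        field_simp
end

section
/- Let X be a measurable space with probability measure μ₀, L₁, L₂ : X → (0, 1] measurable with L_i(x) ≥ c > 0 for all x, Z_i = ∫ L_i dμ₀, and posteriors μ_i(dx) = Z_i^{-1} L_i(x) μ₀(dx). If sup_x |L₁(x) − L₂(x)| ≤ δ, then the squared Hellinger distance satisfies d_Hell(μ₁, μ₂)² ≤ (1/Z₁) ∫ (√L₁ − √L₂)² dμ₀ + |Z₁^{−1/2} − Z₂^{−1/2}|² Z₂ ≤ (δ²/(4c·c)) ·(1/c) + c^{−3} δ², and in particular d_Hell(μ₁, μ₂) ≤ K δ for a constant K depending only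 on c. -/
open MeasureTheory Set

/-!
Writing `√(Lᵢ/Zᵢ) = √Lᵢ · Zᵢ^{-1/2}`, the difference of the posterior square-root densities splits
as `(√L₁ - √L₂) Z₁^{-1/2} + √L₂ (Z₁^{-1/2} - Z₂^{-1/2})`, so `(a + b)² ≤ 2a² + 2b²` gives the first
bound after integrating. Both terms are then controlled by `δ`: since `√u - √v = (u - v)/(√u + √v)`
and `√u + √v ≥ 2√c`, taking square roots on `[c, ∞)` is `1/(2√c)`-Lipschitz, and the same holds
for `Z ↦ Z^{-1/2}` with an extra factor `1/c` coming from `Z₁ Z₂ ≥ c²`.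
-/

namespace Real

theorem sq_sqrt_sub_sqrt_le {c u v δ : ℝ} (hc : 0 < c) (hu : c ≤ u) (hv : c ≤ v)
    (huv : |u - v| ≤ δ) : (√u - √v) ^ 2 ≤ δ ^ 2 / (4 * c) := by
  have hsum : 4 * c ≤ (√u + √v) ^ 2 := by
    have hcu : √c ≤ √u := sqrt_le_sqrt hu
    have hcv : √c ≤ √v := sqrt_le_sqrt hv
    nlinarith [sq_sqrt hc.le, sqrt_nonneg c]
  have hfactor : (u - v) ^ 2 = (√u - √v) ^ 2 * (√u + √v) ^ 2 := by
    have hdiff : (√u - √v) * (√u + √v) = u - v := by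
      linear_combination sq_sqrt (hc.le.trans hu) - sq_sqrt (hc.le.trans hv)
    rw [← mul_pow, hdiff]
  rw [le_div_iff₀ (by positivity)]
  calc (√u - √v) ^ 2 * (4 * c) ≤ (√u - √v) ^ 2 * (√u + √v) ^ 2 := by gcongr
    _ = (u - v) ^ 2 := hfactor.symm
    _ ≤ δ ^ 2 := sq_le_sq' (abs_le.mp huv).1 (abs_le.mp huv).2

theorem sq_inv_sqrt_sub_inv_sqrt_le {c u v δ : ℝ} (hc : 0 < c) (hu : c ≤ u) (hv : c ≤ v)
    (huv : |u - v| ≤ δ) : ((√u)⁻¹ - (√v)⁻¹) ^ 2 ≤ δ ^ 2 / (4 * c ^ 3) := by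
  have hu₀ : 0 < u := hc.trans_le hu
  have hv₀ : 0 < v := hc.trans_le hv
  have hquot : ((√u)⁻¹ - (√v)⁻¹) ^ 2 = (√u - √v) ^ 2 / (u * v) := by
    have hsub : (√u)⁻¹ - (√v)⁻¹ = -(√u - √v) / (√u * √v) := by
      have hsu : 0 < √u := sqrt_pos.mpr hu₀
      have hsv : 0 < √v := sqrt_pos.mpr hv₀
      field_simp
      ring
    rw [hsub, div_pow, neg_sq, mul_pow, sq_sqrt hu₀.le, sq_sqrt hv₀.le]
  rw [hquot, div_le_div_iff₀ (by positivity) (by positivity)]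
  calc (√u - √v) ^ 2 * (4 * c ^ 3) = (√u - √v) ^ 2 * (4 * c) * c ^ 2 := by ring
    _ ≤ δ ^ 2 * (u * v) := by
      gcongr
      · rw [← le_div_iff₀ (by positivity)]
        exact sq_sqrt_sub_sqrt_le hc hu hv huv
      · nlinarith

theorem half_mul_sq_sqrt_div_sub_sqrt_div_le {p q Z₁ Z₂ : ℝ} (hp : 0 ≤ p) (hq : 0 ≤ q)
    (hZ₁ : 0 ≤ Z₁) :
    1 / 2 * (√(p / Z₁) - √(q / Z₂)) ^ 2 ≤
      (√p - √q) ^ 2 / Z₁ + q * ((√Z₁)⁻¹ - (√Z₂)⁻¹) ^ 2 := by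
  have hsplit : √(p / Z₁) - √(q / Z₂) = (√p - √q) * (√Z₁)⁻¹ + √q * ((√Z₁)⁻¹ - (√Z₂)⁻¹) := by
    rw [sqrt_div hp, sqrt_div hq]
    ring
  rw [hsplit]
  calc 1 / 2 * ((√p - √q) * (√Z₁)⁻¹ + √q * ((√Z₁)⁻¹ - (√Z₂)⁻¹)) ^ 2
      ≤ ((√p - √q) * (√Z₁)⁻¹) ^ 2 + (√q * ((√Z₁)⁻¹ - (√Z₂)⁻¹)) ^ 2 := by
        linarith [add_sq_le (a := (√p - √q) * (√Z₁)⁻¹) (b := √q * ((√Z₁)⁻¹ - (√Z₂)⁻¹))]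
    _ = (√p - √q) ^ 2 / Z₁ + q * ((√Z₁)⁻¹ - (√Z₂)⁻¹) ^ 2 := by
        rw [mul_pow, mul_pow, inv_pow, sq_sqrt hZ₁, sq_sqrt hq, div_eq_mul_inv]

end Real

section

variable {X : Type*} [MeasurableSpace X] {μ : Measure X}

theorem integrable_of_forall_mem_Icc [IsFiniteMeasure μ] {f : X → ℝ} {a b : ℝ}
    (hf : Measurable f) (h : ∀ x, f x ∈ Icc a b) : Integrable f μ :=
  .of_bound hf.aestronglyMeasurable (max |a| |b|)
    (ae_of_all _ fun x => abs_le_max_abs_abs (h x).1 (h x).2)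

theorem integral_mem_Icc_of_forall_mem_Icc [IsProbabilityMeasure μ] {f : X → ℝ} {a b : ℝ}
    (hf : Integrable f μ) (h : ∀ x, f x ∈ Icc a b) : ∫ x, f x ∂μ ∈ Icc a b := by
  constructor
  · simpa using integral_mono (integrable_const a) hf fun x => (h x).1
  · simpa using integral_mono hf (integrable_const b) fun x => (h x).2

theorem abs_integral_sub_integral_le [IsProbabilityMeasure μ] {f g : X → ℝ} {δ : ℝ}
    (hf : Integrable f μ) (hg : Integrable g μ) (h : ∀ x, |f x - g x| ≤ δ) :
    |∫ x, f x ∂μ - ∫ x, g x ∂μ| ≤ δ := by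
  rw [← integral_sub hf hg]
  simpa using norm_integral_le_of_norm_le_const (μ := μ) (f := fun x => f x - g x) (ae_of_all _ h)

theorem half_mul_integral_sq_sqrt_div_sub_sqrt_div_le {p q : X → ℝ} {Z₁ Z₂ : ℝ}
    (hp : ∀ x, 0 ≤ p x) (hq : ∀ x, 0 ≤ q x) (hqi : Integrable q μ)
    (hpq : Integrable (fun x => (√(p x) - √(q x)) ^ 2) μ) (hZ₁ : 0 ≤ Z₁) :
    1 / 2 * ∫ x, (√(p x / Z₁) - √(q x / Z₂)) ^ 2 ∂μ ≤
      1 / Z₁ * ∫ x, (√(p x) - √(q x)) ^ 2 ∂μ +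
        ((√Z₁)⁻¹ - (√Z₂)⁻¹) ^ 2 * ∫ x, q x ∂μ := by
  calc 1 / 2 * ∫ x, (√(p x / Z₁) - √(q x / Z₂)) ^ 2 ∂μ
      = ∫ x, 1 / 2 * (√(p x / Z₁) - √(q x / Z₂)) ^ 2 ∂μ := (integral_const_mul _ _).symm
    _ ≤ ∫ x, ((√(p x) - √(q x)) ^ 2 / Z₁ + q x * ((√Z₁)⁻¹ - (√Z₂)⁻¹) ^ 2) ∂μ :=
        integral_mono_of_nonneg (ae_of_all _ fun x => by positivity)
          ((hpq.div_const Z₁).add (hqi.mul_const _))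
          (ae_of_all _ fun x => Real.half_mul_sq_sqrt_div_sub_sqrt_div_le (hp x) (hq x) hZ₁)
    _ = 1 / Z₁ * ∫ x, (√(p x) - √(q x)) ^ 2 ∂μ +
          ((√Z₁)⁻¹ - (√Z₂)⁻¹) ^ 2 * ∫ x, q x ∂μ := by
        rw [integral_add (hpq.div_const Z₁) (hqi.mul_const _), integral_div, integral_mul_const]
        ring

end

/-- Hellinger bound for posteriors. With likelihoods `c ≤ Lᵢ ≤ 1`,
`sup |L₁ − L₂| ≤ δ`, `Zᵢ = ∫ Lᵢ dμ₀`, and posterior densities `Lᵢ/Zᵢ` w.r.t. `μ₀`,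
the squared Hellinger distance is bounded by
`(1/Z₁)∫(√L₁ − √L₂)² dμ₀ + |Z₁^{−1/2} − Z₂^{−1/2}|² Z₂ ≤ (δ²/(4c·c))(1/c) + c⁻³δ²`,
and in particular `d_Hell ≤ K δ` with `K` depending only on `c`. -/
theorem stmt11 {X : Type*} [MeasurableSpace X] (μ₀ : Measure X)
    [IsProbabilityMeasure μ₀] (L₁ L₂ : X → ℝ)
    (hm₁ : Measurable L₁) (hm₂ : Measurable L₂)
    (c δ : ℝ) (hc : 0 < c) (hδ0 : 0 ≤ δ)
    (hlb : ∀ x, c ≤ L₁ x ∧ c ≤ L₂ x)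
    (hub : ∀ x, L₁ x ≤ 1 ∧ L₂ x ≤ 1)
    (hδ : ∀ x, |L₁ x - L₂ x| ≤ δ) :
    (1 / 2) * (∫ x, (Real.sqrt (L₁ x / ∫ z, L₁ z ∂μ₀) -
          Real.sqrt (L₂ x / ∫ z, L₂ z ∂μ₀)) ^ 2 ∂μ₀) ≤
        (1 / ∫ z, L₁ z ∂μ₀) *
            (∫ x, (Real.sqrt (L₁ x) - Real.sqrt (L₂ x)) ^ 2 ∂μ₀) +
          |(Real.sqrt (∫ z, L₁ z ∂μ₀))⁻¹ - (Real.sqrt (∫ z, L₂ z ∂μ₀))⁻¹| ^ 2 *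
            (∫ z, L₂ z ∂μ₀) ∧
    (1 / ∫ z, L₁ z ∂μ₀) *
          (∫ x, (Real.sqrt (L₁ x) - Real.sqrt (L₂ x)) ^ 2 ∂μ₀) +
        |(Real.sqrt (∫ z, L₁ z ∂μ₀))⁻¹ - (Real.sqrt (∫ z, L₂ z ∂μ₀))⁻¹| ^ 2 *
          (∫ z, L₂ z ∂μ₀) ≤
      (δ ^ 2 / (4 * c * c)) * (1 / c) + (c ^ 3)⁻¹ * δ ^ 2 ∧
    Real.sqrt ((1 / 2) * ∫ x, (Real.sqrt (L₁ x / ∫ z, L₁ z ∂μ₀) -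
          Real.sqrt (L₂ x / ∫ z, L₂ z ∂μ₀)) ^ 2 ∂μ₀) ≤
      Real.sqrt ((1 / (4 * c * c)) * (1 / c) + (c ^ 3)⁻¹) * δ := by
  have hL₁ (x : X) : L₁ x ∈ Icc c 1 := ⟨(hlb x).1, (hub x).1⟩
  have hL₂ (x : X) : L₂ x ∈ Icc c 1 := ⟨(hlb x).2, (hub x).2⟩
  have hi₁ : Integrable L₁ μ₀ := integrable_of_forall_mem_Icc hm₁ hL₁
  have hi₂ : Integrable L₂ μ₀ := integrable_of_forall_mem_Icc hm₂ hL₂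
  have hsq (x : X) : (√(L₁ x) - √(L₂ x)) ^ 2 ∈ Icc 0 (δ ^ 2 / (4 * c)) :=
    ⟨sq_nonneg _, Real.sq_sqrt_sub_sqrt_le hc (hL₁ x).1 (hL₂ x).1 (hδ x)⟩
  have hisq : Integrable (fun x => (√(L₁ x) - √(L₂ x)) ^ 2) μ₀ :=
    integrable_of_forall_mem_Icc ((hm₁.sqrt.sub hm₂.sqrt).pow_const 2) hsq
  have hZ₁ := integral_mem_Icc_of_forall_mem_Icc hi₁ hL₁
  have hZ₂ := integral_mem_Icc_of_forall_mem_Icc hi₂ hL₂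
  have hS := integral_mem_Icc_of_forall_mem_Icc hisq hsq
  have hd := Real.sq_inv_sqrt_sub_inv_sqrt_le hc hZ₁.1 hZ₂.1
    (abs_integral_sub_integral_le hi₁ hi₂ hδ)
  have hsplit := half_mul_integral_sq_sqrt_div_sub_sqrt_div_le (Z₂ := ∫ z, L₂ z ∂μ₀)
    (fun x => (hc.trans_le (hL₁ x).1).le) (fun x => (hc.trans_le (hL₂ x).1).le) hi₂ hisq
    (hc.le.trans hZ₁.1)
  rw [← sq_abs] at hsplit hd
  set Z₁ := ∫ z, L₁ z ∂μ₀
  set Z₂ := ∫ z, L₂ z ∂μ₀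
  set S := ∫ x, (√(L₁ x) - √(L₂ x)) ^ 2 ∂μ₀
  have hbound : 1 / Z₁ * S + |(√Z₁)⁻¹ - (√Z₂)⁻¹| ^ 2 * Z₂ ≤
      δ ^ 2 / (4 * c * c) * (1 / c) + (c ^ 3)⁻¹ * δ ^ 2 := by
    have hc₁ : c ≤ 1 := hZ₁.1.trans hZ₁.2
    calc _ ≤ 1 / c * (δ ^ 2 / (4 * c)) + δ ^ 2 / (4 * c ^ 3) * 1 := by
          gcongr
          exacts [hZ₁.1, hS.2, hc.le.trans hZ₂.1, hZ₂.2]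
      _ ≤ _ := by
          field_simp
          nlinarith [sq_nonneg δ]
  refine ⟨hsplit, hbound, ?_⟩
  rw [← Real.sqrt_sq hδ0, ← Real.sqrt_mul (by positivity)]
  exact Real.sqrt_le_sqrt ((hsplit.trans hbound).trans_eq (by ring))
end
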